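/- arXiv:2007.11033 — 6 statements merged into one kernel-verified Lean document; each statement's English description precedes it below -/
import Mathlib

section
/- Let S = {s₁,...,s_ρ} and T be disjoint sets with |T| = ℓ even. Suppose F₁,...,F_ρ are pairwise edge-disjoint perfect matchings of the complete graph on T, and e₁ ∈ F₁, ..., e_ρ ∈ F_ρ are pairwise vertex-disjoint edges. Then the set of triples B = {{s_j} ∪ e : 1 ≤ j ≤ ρ, e ∈ F_j} is a partial Steiner triple system on S ∪ T with exactly ρℓ/2 blocks, and its maximum partial parallel class has size exactly ρ. -/
/-- Construction: given ρ pairwise edge-disjoint perfect matchings of the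
complete graph on a set T of even size ℓ, and pairwise vertex-disjoint edges
e_j ∈ F_j, adjoining s_j to every edge of F_j yields a PSTS on S ∪ T with
ρℓ/2 blocks whose maximum partial parallel class has size exactly ρ. -/
theorem stmt_7 {X : Type*} [DecidableEq X] (ρ ℓ : ℕ)
    (s : Fin ρ → X) (hs : Function.Injective s)
    (T : Finset X) (hT : T.card = ℓ) (hleven : Even ℓ)
    (hST : ∀ j, s j ∉ T)
    (F : Fin ρ → Finset (Finset X))
    (hPM : ∀ j, (∀ e ∈ F j, e.card = 2 ∧ e ⊆ T) ∧
      (∀ e1 ∈ F j, ∀ e2 ∈ F j, e1 ≠ e2 → Disjoint e1 e2) ∧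
      (∀ x ∈ T, ∃ e ∈ F j, x ∈ e))
    (hED : ∀ i j, i ≠ j → Disjoint (F i) (F j))
    (e : Fin ρ → Finset X) (he : ∀ j, e j ∈ F j)
    (heD : ∀ i j, i ≠ j → Disjoint (e i) (e j)) :
    let B := Finset.univ.biUnion (fun j => (F j).image (fun ed => insert (s j) ed))
    ((∀ b ∈ B, b.card = 3) ∧
     (∀ x y : X, x ≠ y → (B.filter (fun b => x ∈ b ∧ y ∈ b)).card ≤ 1)) ∧
    B.card = ρ * ℓ / 2 ∧
    (∃ P ⊆ B, (∀ b1 ∈ P, ∀ b2 ∈ P, b1 ≠ b2 → Disjoint b1 b2) ∧ P.card = ρ) ∧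
    (∀ P ⊆ B, (∀ b1 ∈ P, ∀ b2 ∈ P, b1 ≠ b2 → Disjoint b1 b2) → P.card ≤ ρ) := by
  intro B
  classical
  have hmem : ∀ b, b ∈ B ↔ ∃ j, ∃ ed ∈ F j, b = insert (s j) ed := by
    intro b
    simp only [B, Finset.mem_biUnion, Finset.mem_univ, true_and, Finset.mem_image]
    constructor
    · rintro ⟨j, ed, hed, rfl⟩; exact ⟨j, ed, hed, rfl⟩
    · rintro ⟨j, ed, hed, rfl⟩; exact ⟨j, ed, hed, rfl⟩
  have hsub : ∀ j, ∀ ed ∈ F j, ed ⊆ T := fun j ed hed => ((hPM j).1 ed hed).2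
  have hcard2 : ∀ j, ∀ ed ∈ F j, ed.card = 2 := fun j ed hed => ((hPM j).1 ed hed).1
  have hsnot : ∀ i j, ∀ ed ∈ F j, s i ∉ ed := fun i j ed hed hx => hST i (hsub j ed hed hx)
  have huniq : ∀ j (x : X), ∀ e1 ∈ F j, ∀ e2 ∈ F j, x ∈ e1 → x ∈ e2 → e1 = e2 := by
    intro j x e1 h1 e2 h2 hx1 hx2
    by_contra hne
    exact Finset.disjoint_left.mp ((hPM j).2.1 e1 h1 e2 h2 hne) hx1 hx2
  have hedge_eq : ∀ j, ∀ ed ∈ F j, ∀ x y : X, x ≠ y → x ∈ ed → y ∈ ed → ed = {x, y} := by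
    intro j ed hed x y hxy hx hy
    have hsub' : ({x, y} : Finset X) ⊆ ed := by
      intro z hz
      rcases Finset.mem_insert.mp hz with rfl | hz
      · exact hx
      · rcases Finset.mem_singleton.mp hz with rfl; exact hy
    exact (Finset.eq_of_subset_of_card_le hsub'
      (by rw [Finset.card_pair hxy, hcard2 j ed hed])).symm
  have hjeq : ∀ i j (ed1 ed2 : Finset X), ed1 ∈ F i → ed2 ∈ F j →
      insert (s i) ed1 = insert (s j) ed2 → i = j := by
    intro i j ed1 ed2 h1 h2 heq
    have hmi : s i ∈ insert (s j) ed2 := heq ▸ Finset.mem_insert_self _ _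
    rcases Finset.mem_insert.mp hmi with h | h
    · exact hs h
    · exact absurd h (hsnot i j ed2 h2)
  have himg_inj : ∀ j : Fin ρ, Set.InjOn (fun ed : Finset X => insert (s j) ed) ↑(F j) := by
    intro j ed1 h1 ed2 h2 heq
    simp only at heq
    have h := congrArg (fun t : Finset X => t.erase (s j)) heq
    simp only [Finset.erase_insert (hsnot j j ed1 h1),
      Finset.erase_insert (hsnot j j ed2 h2)] at h
    exact h
  -- cardinality of each matching
  have hFcard : ∀ j, 2 * (F j).card = ℓ := by
    intro j
    have hT_eq : T = (F j).biUnion id := by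
      ext x
      simp only [Finset.mem_biUnion, id]
      exact ⟨fun hx => (hPM j).2.2 x hx, fun ⟨ed, hed, hx⟩ => hsub j ed hed hx⟩
    have hdis : ∀ e1 ∈ F j, ∀ e2 ∈ F j, e1 ≠ e2 → Disjoint (id e1) (id e2) :=
      fun e1 h1 e2 h2 hne => (hPM j).2.1 e1 h1 e2 h2 hne
    have hcb : ((F j).biUnion id).card = 2 * (F j).card := by
      rw [Finset.card_biUnion hdis]
      rw [Finset.sum_congr rfl (fun ed hed => show (id ed).card = 2 from hcard2 j ed hed)]
      simp [mul_comm]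
    rw [← hT, hT_eq, hcb]
  -- pair uniqueness core lemma
  have hpaircore : ∀ x y : X, x ≠ y → ∀ j1 (ed1 : Finset X), ed1 ∈ F j1 →
      ∀ j2 (ed2 : Finset X), ed2 ∈ F j2 →
      x ∈ insert (s j1) ed1 → y ∈ insert (s j1) ed1 →
      x ∈ insert (s j2) ed2 → y ∈ insert (s j2) ed2 →
      insert (s j1) ed1 = insert (s j2) ed2 := by
    intro x y hxy j1 ed1 h1 j2 ed2 h2 hx1 hy1 hx2 hy2
    rcases Finset.mem_insert.mp hx1 with hxs1 | hxe1
    · -- x = s j1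
      rcases Finset.mem_insert.mp hy1 with hys1 | hye1
      · exact absurd (hxs1.trans hys1.symm) hxy
      · -- y ∈ ed1 ⊆ T
        have hj : j1 = j2 := by
          rcases Finset.mem_insert.mp hx2 with h | h
          · exact hs (hxs1 ▸ h : s j1 = s j2)
          · exact absurd (hxs1 ▸ h) (hsnot j1 j2 ed2 h2)
        subst hj
        have hye2 : y ∈ ed2 := by
          rcases Finset.mem_insert.mp hy2 with h | h
          · exact absurd (h ▸ hsub j1 ed1 h1 hye1) (hST j1)
          · exact h
        rw [huniq j1 y ed1 h1 ed2 h2 hye1 hye2]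
    · rcases Finset.mem_insert.mp hy1 with hys1 | hye1
      · -- y = s j1, x ∈ ed1
        have hj : j1 = j2 := by
          rcases Finset.mem_insert.mp hy2 with h | h
          · exact hs (hys1 ▸ h : s j1 = s j2)
          · exact absurd (hys1 ▸ h) (hsnot j1 j2 ed2 h2)
        subst hj
        have hxe2 : x ∈ ed2 := by
          rcases Finset.mem_insert.mp hx2 with h | h
          · exact absurd (h ▸ hsub j1 ed1 h1 hxe1) (hST j1)
          · exact h
        rw [huniq j1 x ed1 h1 ed2 h2 hxe1 hxe2]
      · -- x, y ∈ ed1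
        have hxe2 : x ∈ ed2 := by
          rcases Finset.mem_insert.mp hx2 with h | h
          · exact absurd (h ▸ hsub j1 ed1 h1 hxe1) (hST j2)
          · exact h
        have hye2 : y ∈ ed2 := by
          rcases Finset.mem_insert.mp hy2 with h | h
          · exact absurd (h ▸ hsub j1 ed1 h1 hye1) (hST j2)
          · exact h
        have hed12 : ed1 = ed2 := by
          rw [hedge_eq j1 ed1 h1 x y hxy hxe1 hye1, hedge_eq j2 ed2 h2 x y hxy hxe2 hye2]
        have hj : j1 = j2 := by
          by_contra hne
          exact Finset.disjoint_left.mp (hED j1 j2 hne) h1 (hed12 ▸ h2)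
        rw [hj, hed12]
  refine ⟨⟨?_, ?_⟩, ?_, ?_, ?_⟩
  · -- blocks have card 3
    intro b hb
    obtain ⟨j, ed, hed, rfl⟩ := (hmem b).mp hb
    rw [Finset.card_insert_of_notMem (hsnot j j ed hed), hcard2 j ed hed]
  · -- linearity
    intro x y hxy
    apply Finset.card_le_one.mpr
    intro b1 hb1 b2 hb2
    rw [Finset.mem_filter] at hb1 hb2
    obtain ⟨j1, ed1, h1, rfl⟩ := (hmem b1).mp hb1.1
    obtain ⟨j2, ed2, h2, rfl⟩ := (hmem b2).mp hb2.1
    exact hpaircore x y hxy j1 ed1 h1 j2 ed2 h2 hb1.2.1 hb1.2.2 hb2.2.1 hb2.2.2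
  · -- cardinality of B
    have hdisj : ∀ i ∈ (Finset.univ : Finset (Fin ρ)), ∀ j ∈ Finset.univ, i ≠ j →
        Disjoint ((F i).image (fun ed => insert (s i) ed))
          ((F j).image (fun ed => insert (s j) ed)) := by
      intro i _ j _ hne
      rw [Finset.disjoint_left]
      rintro b hbi hbj
      obtain ⟨ed1, h1, rfl⟩ := Finset.mem_image.mp hbi
      obtain ⟨ed2, h2, heq⟩ := Finset.mem_image.mp hbj
      exact hne (hjeq i j ed1 ed2 h1 h2 heq.symm)
    have hB : B.card = ∑ j, ((F j).image (fun ed => insert (s j) ed)).card :=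
      Finset.card_biUnion hdisj
    have himg : ∀ j : Fin ρ, ((F j).image (fun ed => insert (s j) ed)).card = (F j).card :=
      fun j => Finset.card_image_of_injOn (himg_inj j)
    have h2l : 2 ∣ ℓ := hleven.two_dvd
    have hFc : ∀ j : Fin ρ, (F j).card = ℓ / 2 := by
      intro j
      have := hFcard j
      omega
    rw [hB, Finset.sum_congr rfl (fun j _ => (himg j).trans (hFc j))]
    simp only [Finset.sum_const, Finset.card_univ, Fintype.card_fin, smul_eq_mul]
    rw [Nat.mul_div_assoc ρ h2l]
  · -- existence of PPC of size ρ
    refine ⟨Finset.univ.image (fun j => insert (s j) (e j)), ?_, ?_, ?_⟩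
    · intro b hb
      obtain ⟨j, _, rfl⟩ := Finset.mem_image.mp hb
      exact (hmem _).mpr ⟨j, e j, he j, rfl⟩
    · intro b1 hb1 b2 hb2 hne
      obtain ⟨i, _, rfl⟩ := Finset.mem_image.mp hb1
      obtain ⟨j, _, rfl⟩ := Finset.mem_image.mp hb2
      have hij : i ≠ j := fun h => hne (by rw [h])
      rw [Finset.disjoint_left]
      intro a ha1 ha2
      rcases Finset.mem_insert.mp ha1 with rfl | ha1
      · rcases Finset.mem_insert.mp ha2 with h | h
        · exact hij (hs h)
        · exact hsnot i j (e j) (he j) h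
      · rcases Finset.mem_insert.mp ha2 with h | h
        · exact hsnot j i (e i) (he i) (h ▸ ha1)
        · exact Finset.disjoint_left.mp (heD i j hij) ha1 h
    · rw [Finset.card_image_of_injective _ ?_, Finset.card_univ, Fintype.card_fin]
      intro i j hij
      simp only at hij
      by_contra hne
      have : s i ∈ insert (s j) (e j) := hij ▸ Finset.mem_insert_self _ _
      rcases Finset.mem_insert.mp this with h | h
      · exact hne (hs h)
      · exact hsnot i j (e j) (he j) h
  · -- upper bound
    intro P hPB hPd
    rcases Nat.eq_zero_or_pos ρ with rfl | hρ
    · have hB0 : B = ∅ := Finset.eq_empty_of_forall_notMem fun b hb =>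
        Fin.elim0 ((hmem b).mp hb).choose
      have hP0 : P = ∅ := Finset.subset_empty.mp (hB0 ▸ hPB)
      simp [hP0]
    haveI : Nonempty (Fin ρ) := ⟨⟨0, hρ⟩⟩
    set f : Finset X → Fin ρ := fun b =>
      if h : ∃ j, ∃ ed ∈ F j, b = insert (s j) ed then h.choose else Classical.arbitrary _
      with hf
    have hfs : ∀ b ∈ P, s (f b) ∈ b := by
      intro b hb
      have h := (hmem b).mp (hPB hb)
      have hfb : f b = h.choose := by
        simp only [hf]
        exact dif_pos h
      obtain ⟨ed, hed, hbe⟩ := h.choose_spec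
      have hmem2 : s h.choose ∈ b :=
        Eq.subst (motive := fun t => s h.choose ∈ t) hbe.symm (Finset.mem_insert_self _ _)
      rw [hfb]
      exact hmem2
    calc P.card ≤ (Finset.univ : Finset (Fin ρ)).card := by
          apply Finset.card_le_card_of_injOn f (fun b _ => Finset.mem_univ _)
          intro b1 hb1 b2 hb2 hfeq
          by_contra hne
          exact Finset.disjoint_left.mp (hPd b1 hb1 b2 hb2 hne) (hfs b1 hb1)
            (hfeq ▸ hfs b2 hb2)
      _ = ρ := by simp
end

section
/- Suppose (X, B) is a partial Steiner triple system with maximum partial parallel class size ρ, and let P be the union of the points of a partial parallel class of size ρ. If a block B₀ = {x, y, z} of this class satisfies: x lies in at least 3 blocks each meeting P only in x, and y lies in at least 1 block meeting P only in y, then one obtains a partial parallel class of size ρ + 1 — a contradiction. Hence no such block exists. -/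
/-- Lindner–Phelps observation: in a PSTS with maximum partial parallel class
size ρ, for a block B₀ = {x,y,...} of a partial parallel class of size ρ with
point set P, it cannot happen that x lies in ≥ 3 blocks meeting P only in x
while y lies in ≥ 1 block meeting P only in y. -/
theorem stmt_8 {X : Type*} [DecidableEq X]
    (B : Finset (Finset X)) (ρ : ℕ)
    (hcard : ∀ b ∈ B, b.card = 3)
    (hpair : ∀ x y : X, x ≠ y → (B.filter (fun b => x ∈ b ∧ y ∈ b)).card ≤ 1)
    (C : Finset (Finset X)) (hCB : C ⊆ B)
    (hdisj : ∀ b1 ∈ C, ∀ b2 ∈ C, b1 ≠ b2 → Disjoint b1 b2)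
    (hsize : C.card = ρ)
    (hmax : ∀ Q ⊆ B, (∀ b1 ∈ Q, ∀ b2 ∈ Q, b1 ≠ b2 → Disjoint b1 b2) → Q.card ≤ ρ)
    (P : Finset X) (hP : P = C.biUnion id)
    (B0 : Finset X) (hB0 : B0 ∈ C)
    (x y : X) (hx : x ∈ B0) (hy : y ∈ B0) (hxy : x ≠ y) :
    ¬ (3 ≤ (B.filter (fun b => b ∩ P = {x})).card ∧
       1 ≤ (B.filter (fun b => b ∩ P = {y})).card) := by
  rintro ⟨h3, h1⟩
  have hsubP : ∀ b ∈ C, b ⊆ P := by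
    intro b hb w hw
    rw [hP]
    exact Finset.mem_biUnion.2 ⟨b, hb, hw⟩
  have hxP : x ∈ P := hsubP B0 hB0 hx
  have hyP : y ∈ P := hsubP B0 hB0 hy
  have memof : ∀ (b : Finset X) (p : X), b ∩ P = {p} → p ∈ b := by
    intro b p hp
    have : p ∈ b ∩ P := by rw [hp]; exact Finset.mem_singleton_self p
    exact (Finset.mem_inter.1 this).1
  -- get b_y
  obtain ⟨by_, hby⟩ := Finset.card_pos.1 (lt_of_lt_of_le one_pos h1)
  rw [Finset.mem_filter] at hby
  obtain ⟨hbyB, hbyP⟩ := hby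
  have hyby : y ∈ by_ := memof by_ y hbyP
  have hxnby : x ∉ by_ := by
    intro h
    have : x ∈ by_ ∩ P := Finset.mem_inter.2 ⟨h, hxP⟩
    rw [hbyP, Finset.mem_singleton] at this
    exact hxy this
  set S := B.filter (fun b => b ∩ P = {x}) with hS
  -- at most 2 blocks of S meet by_
  have hT : (S.filter (fun b => ¬ Disjoint b by_)).card ≤ 2 := by
    have hsub : S.filter (fun b => ¬ Disjoint b by_) ⊆
        (by_.erase y).biUnion (fun w => B.filter (fun b => x ∈ b ∧ w ∈ b)) := by
      intro b hb
      rw [Finset.mem_filter] at hb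
      obtain ⟨hbS, hnd⟩ := hb
      rw [hS, Finset.mem_filter] at hbS
      obtain ⟨hbB, hbP⟩ := hbS
      rw [Finset.not_disjoint_iff] at hnd
      obtain ⟨w, hwb, hwby⟩ := hnd
      have hwy : w ≠ y := by
        rintro rfl
        have : w ∈ b ∩ P := Finset.mem_inter.2 ⟨hwb, hyP⟩
        rw [hbP, Finset.mem_singleton] at this
        exact hxy this.symm
      exact Finset.mem_biUnion.2 ⟨w, Finset.mem_erase.2 ⟨hwy, hwby⟩,
        Finset.mem_filter.2 ⟨hbB, memof b x hbP, hwb⟩⟩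
    calc (S.filter (fun b => ¬ Disjoint b by_)).card
        ≤ ((by_.erase y).biUnion (fun w => B.filter (fun b => x ∈ b ∧ w ∈ b))).card :=
          Finset.card_le_card hsub
      _ ≤ ∑ w ∈ by_.erase y, (B.filter (fun b => x ∈ b ∧ w ∈ b)).card :=
          Finset.card_biUnion_le
      _ ≤ ∑ _w ∈ by_.erase y, 1 := by
          apply Finset.sum_le_sum
          intro w hw
          obtain ⟨hwy, hwby⟩ := Finset.mem_erase.1 hw
          apply hpair
          rintro rfl
          have hmem : x ∈ by_ ∩ P := Finset.mem_inter.2 ⟨hwby, hxP⟩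
          rw [hbyP, Finset.mem_singleton] at hmem
          exact hwy hmem
      _ = (by_.erase y).card := by simp
      _ ≤ 2 := by
          rw [Finset.card_erase_of_mem hyby, hcard by_ hbyB]
  -- pick bx ∈ S disjoint from by_
  have hex : ∃ b ∈ S, Disjoint b by_ := by
    by_contra hcon
    push_neg at hcon
    have hsub : S ⊆ S.filter (fun b => ¬ Disjoint b by_) :=
      fun b hb => Finset.mem_filter.2 ⟨hb, hcon b hb⟩
    have := Finset.card_le_card hsub
    omega
  obtain ⟨bx, hbxS, hbxd⟩ := hex
  rw [hS, Finset.mem_filter] at hbxS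
  obtain ⟨hbxB, hbxP⟩ := hbxS
  have hxbx : x ∈ bx := memof bx x hbxP
  -- blocks meeting P in one point are not in C
  have hnotC : ∀ b ∈ B, ∀ p : X, b ∩ P = {p} → b ∉ C := by
    intro b hbB p hp hbC
    have h' : b ∩ P = b := Finset.inter_eq_left.2 (hsubP b hbC)
    rw [hp] at h'
    have := congrArg Finset.card h'
    rw [Finset.card_singleton, hcard b hbB] at this
    omega
  -- members of C.erase B0 are disjoint from bx and by_
  have hkey : ∀ b ∈ C.erase B0, ∀ c ∈ B, ∀ p ∈ B0, c ∩ P = {p} → Disjoint b c := by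
    intro b hb c hcB p hpB0 hcP
    obtain ⟨hbne, hbC⟩ := Finset.mem_erase.1 hb
    rw [Finset.disjoint_left]
    intro w hwb hwc
    have hwP : w ∈ P := hsubP b hbC hwb
    have hw : w ∈ c ∩ P := Finset.mem_inter.2 ⟨hwc, hwP⟩
    rw [hcP, Finset.mem_singleton] at hw
    subst hw
    exact Finset.disjoint_left.1 (hdisj b hbC B0 hB0 hbne) hwb hpB0
  set Q := insert bx (insert by_ (C.erase B0)) with hQ
  have hQB : Q ⊆ B := by
    intro b hb
    rw [hQ, Finset.mem_insert, Finset.mem_insert] at hb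
    rcases hb with rfl | rfl | hb
    · exact hbxB
    · exact hbyB
    · exact hCB (Finset.mem_erase.1 hb).2
  have hQdisj : ∀ b1 ∈ Q, ∀ b2 ∈ Q, b1 ≠ b2 → Disjoint b1 b2 := by
    intro b1 hb1 b2 hb2 hne
    rw [hQ, Finset.mem_insert, Finset.mem_insert] at hb1 hb2
    rcases hb1 with rfl | rfl | hb1 <;> rcases hb2 with rfl | rfl | hb2
    · exact absurd rfl hne
    · exact hbxd
    · exact (hkey _ hb2 _ hbxB x hx hbxP).symm
    · exact hbxd.symm
    · exact absurd rfl hne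
    · exact (hkey _ hb2 _ hbyB y hy hbyP).symm
    · exact hkey _ hb1 _ hbxB x hx hbxP
    · exact hkey _ hb1 _ hbyB y hy hbyP
    · exact hdisj _ (Finset.mem_erase.1 hb1).2 _ (Finset.mem_erase.1 hb2).2 hne
  have hQcard : Q.card = ρ + 1 := by
    have h1' : by_ ∉ C.erase B0 :=
      fun h => hnotC by_ hbyB y hbyP (Finset.mem_erase.1 h).2
    have h2' : bx ∉ insert by_ (C.erase B0) := by
      rw [Finset.mem_insert]
      rintro (rfl | h)
      · exact hxnby hxbx
      · exact hnotC bx hbxB x hbxP (Finset.mem_erase.1 h).2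
    rw [hQ, Finset.card_insert_of_notMem h2', Finset.card_insert_of_notMem h1',
      Finset.card_erase_of_mem hB0, hsize]
    have : 1 ≤ ρ := hsize ▸ Finset.card_pos.2 ⟨B0, hB0⟩
    omega
  have := hmax Q hQB hQdisj
  omega
end

section
/- Let (X, B) be a PSTS(v) with maximum partial parallel class size ρ, let {B₁,...,B_ρ} be a partial parallel class of size ρ with point set P, and for x ∈ P let t_x be the number of blocks containing x and two points outside P. Then for any block B_i = {x,y,z} of the class, either at most one of x, y, z has positive t-value and t_x + t_y + t_z ≤ (v - 3ρ)/2, or at least two have positive t-value and t_x + t_y + t_z ≤ 6. -/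
/-- Lemma (Lindner–Phelps): for any block B_i = {x,y,z} of a maximum partial
parallel class of size ρ in a PSTS(v), either at most one of x,y,z has a
positive t-value and t_x + t_y + t_z ≤ (v-3ρ)/2, or at least two have positive
t-values and t_x + t_y + t_z ≤ 6. -/
theorem stmt_9 {X : Type*} [Fintype X] [DecidableEq X]
    (B : Finset (Finset X)) (ρ : ℕ)
    (hcard : ∀ b ∈ B, b.card = 3)
    (hpair : ∀ x y : X, x ≠ y → (B.filter (fun b => x ∈ b ∧ y ∈ b)).card ≤ 1)
    (C : Finset (Finset X)) (hCB : C ⊆ B)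
    (hdisj : ∀ b1 ∈ C, ∀ b2 ∈ C, b1 ≠ b2 → Disjoint b1 b2)
    (hsize : C.card = ρ)
    (hmax : ∀ Q ⊆ B, (∀ b1 ∈ Q, ∀ b2 ∈ Q, b1 ≠ b2 → Disjoint b1 b2) → Q.card ≤ ρ)
    (P : Finset X) (hP : P = C.biUnion id)
    (Bi : Finset X) (hBi : Bi ∈ C)
    (x y z : X) (hxyz : Bi = {x, y, z})
    (hxy : x ≠ y) (hxz : x ≠ z) (hyz : y ≠ z) :
    let t : X → ℕ := fun w => (B.filter (fun b => b ∩ P = {w})).card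
    (((({x, y, z} : Finset X).filter (fun w => 0 < t w)).card ≤ 1 ∧
        t x + t y + t z ≤ (Fintype.card X - 3 * ρ) / 2) ∨
     (2 ≤ (({x, y, z} : Finset X).filter (fun w => 0 < t w)).card ∧
        t x + t y + t z ≤ 6)) := by
  classical
  intro t
  have ht : ∀ w, t w = (B.filter (fun b => b ∩ P = {w})).card := fun w => rfl
  have hCP : ∀ c ∈ C, c ⊆ P := by
    intro c hc a ha
    rw [hP]
    exact Finset.mem_biUnion.mpr ⟨c, hc, ha⟩
  have hBiP : Bi ⊆ P := hCP Bi hBi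
  have hρpos : 1 ≤ ρ := hsize ▸ Finset.card_pos.mpr ⟨Bi, hBi⟩
  have hPcard : P.card = 3 * ρ := by
    have hcb : (C.biUnion id).card = ∑ c ∈ C, (id c).card := Finset.card_biUnion hdisj
    have hcc : ∑ c ∈ C, (id c).card = ∑ _c ∈ C, 3 :=
      Finset.sum_congr rfl (fun c hc => hcard c (hCB hc))
    rw [hP, hcb, hcc]
    simp [hsize, mul_comm]
  -- bound 1 : t w ≤ (v - 3ρ)/2
  have key1 : ∀ w, t w ≤ (Fintype.card X - 3 * ρ) / 2 := by
    intro w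
    rw [Nat.le_div_iff_mul_le two_pos, ht w]
    set F := B.filter (fun b => b ∩ P = {w}) with hF
    have hmemF : ∀ b ∈ F, b ∈ B ∧ b ∩ P = {w} := by
      intro b hb
      rw [hF, Finset.mem_filter] at hb
      exact hb
    have hwb : ∀ b ∈ F, w ∈ b := by
      intro b hb
      have : w ∈ b ∩ P := by rw [(hmemF b hb).2]; exact Finset.mem_singleton_self w
      exact (Finset.mem_inter.mp this).1
    have hwP : ∀ b ∈ F, w ∈ P := by
      intro b hb
      have : w ∈ b ∩ P := by rw [(hmemF b hb).2]; exact Finset.mem_singleton_self w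
      exact (Finset.mem_inter.mp this).2
    have hdF : ∀ b1 ∈ F, ∀ b2 ∈ F, b1 ≠ b2 → Disjoint (b1 \ P) (b2 \ P) := by
      intro b1 h1 b2 h2 hne
      rw [Finset.disjoint_left]
      intro u hu1 hu2
      have huP : u ∉ P := (Finset.mem_sdiff.mp hu1).2
      have hu1' : u ∈ b1 := (Finset.mem_sdiff.mp hu1).1
      have hu2' : u ∈ b2 := (Finset.mem_sdiff.mp hu2).1
      have hwu : w ≠ u := fun h => huP (h ▸ hwP b1 h1)
      have h2le : 2 ≤ (B.filter (fun b => w ∈ b ∧ u ∈ b)).card := by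
        refine Finset.one_lt_card.mpr ⟨b1, ?_, b2, ?_, hne⟩ <;>
          simp [Finset.mem_filter, (hmemF b1 h1).1, (hmemF b2 h2).1, hu1', hu2',
            hwb b1 h1, hwb b2 h2]
      have := hpair w u hwu
      omega
    have hcard2 : ∀ b ∈ F, (b \ P).card = 2 := by
      intro b hb
      obtain ⟨hbB, hbP⟩ := hmemF b hb
      have h3 := hcard b hbB
      have h4 := Finset.card_sdiff_add_card_inter b P
      rw [hbP] at h4
      simp only [Finset.card_singleton] at h4
      omega
    have hbU : (F.biUnion (fun b => b \ P)).card = 2 * F.card := by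
      rw [Finset.card_biUnion hdF, Finset.sum_congr rfl hcard2]
      simp [mul_comm]
    have hsub : F.biUnion (fun b => b \ P) ⊆ Finset.univ \ P := by
      intro u hu
      obtain ⟨b, hb, hub⟩ := Finset.mem_biUnion.mp hu
      simp [Finset.mem_sdiff, (Finset.mem_sdiff.mp hub).2]
    have hle := Finset.card_le_card hsub
    rw [hbU, Finset.card_sdiff_of_subset (Finset.subset_univ P), Finset.card_univ, hPcard] at hle
    omega
  -- blocks meeting P in one point of Bi are not in C and disjoint from C \ {Bi}
  have hnotC : ∀ e, ∀ (w : X), e ∈ B → e ∩ P = {w} → e ∉ C := by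
    intro e w heB heP heC
    have hsub : e ⊆ P := hCP e heC
    rw [Finset.inter_eq_left.mpr hsub] at heP
    have h3 := hcard e heB
    rw [heP] at h3
    simp at h3
  have hsep : ∀ (w : X), w ∈ Bi → ∀ e, e ∩ P = {w} → ∀ c ∈ C.erase Bi, Disjoint e c := by
    intro w hw e heP c hc
    have hcC : c ∈ C := Finset.mem_of_mem_erase hc
    have hcBi : c ≠ Bi := Finset.ne_of_mem_erase hc
    rw [Finset.disjoint_left]
    intro u hue huc
    have hmem : u ∈ e ∩ P := Finset.mem_inter.mpr ⟨hue, hCP c hcC huc⟩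
    rw [heP, Finset.mem_singleton] at hmem
    subst hmem
    exact (Finset.disjoint_left.mp (hdisj c hcC Bi hBi hcBi) huc) hw
  -- key 2 : if w1, w2 ∈ Bi distinct and t w2 > 0, then t w1 ≤ 2
  have key2 : ∀ w1 ∈ Bi, ∀ w2 ∈ Bi, w1 ≠ w2 → 0 < t w2 → t w1 ≤ 2 := by
    intro w1 hw1 w2 hw2 hne ht2
    rw [ht w2, Finset.card_pos] at ht2
    obtain ⟨b2, hb2⟩ := ht2
    obtain ⟨hb2B, hb2P⟩ := Finset.mem_filter.mp hb2
    have hw2b2 : w2 ∈ b2 := by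
      have : w2 ∈ b2 ∩ P := by rw [hb2P]; exact Finset.mem_singleton_self w2
      exact (Finset.mem_inter.mp this).1
    have hw2P : w2 ∈ P := hBiP hw2
    have hw1P : w1 ∈ P := hBiP hw1
    have hmeet : ∀ b ∈ B.filter (fun b => b ∩ P = {w1}), (b ∩ (b2 \ {w2})).Nonempty := by
      intro b hb
      obtain ⟨hbB, hbP⟩ := Finset.mem_filter.mp hb
      by_contra hemp
      have hdd : Disjoint b b2 := by
        rw [Finset.disjoint_left]
        intro u hub hub2
        have huw2 : u ≠ w2 := by
          intro h
          subst h
          have hm : u ∈ b ∩ P := Finset.mem_inter.mpr ⟨hub, hw2P⟩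
          rw [hbP, Finset.mem_singleton] at hm
          exact hne hm.symm
        exact hemp ⟨u, Finset.mem_inter.mpr ⟨hub, Finset.mem_sdiff.mpr ⟨hub2, by simp [huw2]⟩⟩⟩
      have hbne : b ≠ b2 := by
        intro h
        have hss : ({w1} : Finset X) = {w2} := by rw [← hbP, h, hb2P]
        exact hne (Finset.singleton_inj.mp hss)
      have hbC : b ∉ C := hnotC b w1 hbB hbP
      have hb2C : b2 ∉ C := hnotC b2 w2 hb2B hb2P
      have hb2e : b2 ∉ C.erase Bi := fun h => hb2C (Finset.mem_of_mem_erase h)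
      have hbe : b ∉ insert b2 (C.erase Bi) := by
        intro h
        rcases Finset.mem_insert.mp h with h | h
        · exact hbne h
        · exact hbC (Finset.mem_of_mem_erase h)
      set Q := insert b (insert b2 (C.erase Bi)) with hQ
      have hQB : Q ⊆ B := by
        intro c hc
        rcases Finset.mem_insert.mp hc with h | h
        · exact h ▸ hbB
        rcases Finset.mem_insert.mp h with h | h
        · exact h ▸ hb2B
        · exact hCB (Finset.mem_of_mem_erase h)
      have hQd : ∀ c1 ∈ Q, ∀ c2 ∈ Q, c1 ≠ c2 → Disjoint c1 c2 := by
        intro c1 h1 c2 h2 hne12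
        rcases Finset.mem_insert.mp h1 with e1 | h1'
        · subst e1
          rcases Finset.mem_insert.mp h2 with e2 | h2'
          · exact absurd e2.symm hne12
          rcases Finset.mem_insert.mp h2' with e2 | h2''
          · exact e2 ▸ hdd
          · exact hsep w1 hw1 c1 hbP c2 h2''
        rcases Finset.mem_insert.mp h1' with e1 | h1''
        · subst e1
          rcases Finset.mem_insert.mp h2 with e2 | h2'
          · exact e2 ▸ hdd.symm
          rcases Finset.mem_insert.mp h2' with e2 | h2''
          · exact absurd e2.symm hne12
          · exact hsep w2 hw2 c1 hb2P c2 h2''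
        · rcases Finset.mem_insert.mp h2 with e2 | h2'
          · exact e2 ▸ (hsep w1 hw1 b hbP c1 h1'').symm
          rcases Finset.mem_insert.mp h2' with e2 | h2''
          · exact e2 ▸ (hsep w2 hw2 b2 hb2P c1 h1'').symm
          · exact hdisj c1 (Finset.mem_of_mem_erase h1'') c2 (Finset.mem_of_mem_erase h2'') hne12
      have hQcard : Q.card = ρ + 1 := by
        rw [hQ, Finset.card_insert_of_notMem hbe, Finset.card_insert_of_notMem hb2e,
          Finset.card_erase_of_mem hBi, hsize]
        omega
      have := hmax Q hQB hQd
      omega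
    -- inject the blocks through w1 into b2 \ {w2}
    set F := B.filter (fun b => b ∩ P = {w1}) with hF
    set f : Finset X → X := fun b => if h : (b ∩ (b2 \ {w2})).Nonempty then h.choose else w2 with hf
    have hfmem : ∀ b ∈ F, f b ∈ b ∩ (b2 \ {w2}) := by
      intro b hb
      have h := hmeet b hb
      simp only [hf, dif_pos h]
      exact h.choose_spec
    have hinj : Set.InjOn f F := by
      intro b hb b' hb' hff
      rw [Finset.mem_coe] at hb hb'
      have h1 := hfmem b hb
      have h2 := hfmem b' hb'
      rw [hF, Finset.mem_filter] at hb hb'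
      obtain ⟨hbB, hbP⟩ := hb
      obtain ⟨hb'B, hb'P⟩ := hb'
      have hub : f b ∈ b := (Finset.mem_inter.mp h1).1
      have hub2 : f b ∈ b2 \ {w2} := (Finset.mem_inter.mp h1).2
      have hub' : f b ∈ b' := by rw [hff]; exact (Finset.mem_inter.mp h2).1
      have hw1b : w1 ∈ b := by
        have : w1 ∈ b ∩ P := by rw [hbP]; exact Finset.mem_singleton_self w1
        exact (Finset.mem_inter.mp this).1
      have hw1b' : w1 ∈ b' := by
        have : w1 ∈ b' ∩ P := by rw [hb'P]; exact Finset.mem_singleton_self w1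
        exact (Finset.mem_inter.mp this).1
      have huw1 : f b ≠ w1 := by
        intro h
        have hm : f b ∈ b2 ∩ P := Finset.mem_inter.mpr ⟨(Finset.mem_sdiff.mp hub2).1, h ▸ hw1P⟩
        rw [hb2P, Finset.mem_singleton] at hm
        exact (Finset.mem_sdiff.mp hub2).2 (by simp [hm])
      by_contra hneq
      have h2le : 2 ≤ (B.filter (fun c => w1 ∈ c ∧ f b ∈ c)).card := by
        refine Finset.one_lt_card.mpr ⟨b, ?_, b', ?_, hneq⟩ <;>
          simp [Finset.mem_filter, hbB, hb'B, hw1b, hw1b', hub, hub']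
      have := hpair w1 (f b) (Ne.symm huw1)
      omega
    have hle := Finset.card_le_card_of_injOn f (fun b hb => (Finset.mem_inter.mp (hfmem b hb)).2) hinj
    have hc2 : (b2 \ {w2}).card = 2 := by
      rw [Finset.card_sdiff_of_subset (by simp [hw2b2]), hcard b2 hb2B]
      simp
    rw [ht w1, ← hF]
    omega
  -- assemble
  set S := ({x, y, z} : Finset X).filter (fun w => 0 < t w) with hS
  have hS2 : ∀ a b : X, a ∈ ({x, y, z} : Finset X) → b ∈ ({x, y, z} : Finset X) →
      a ≠ b → 0 < t a → 0 < t b → 2 ≤ S.card := by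
    intro a b ha hb hab hta htb
    exact Finset.one_lt_card.mpr ⟨a, Finset.mem_filter.mpr ⟨ha, hta⟩,
      b, Finset.mem_filter.mpr ⟨hb, htb⟩, hab⟩
  by_cases hSc : S.card ≤ 1
  · left
    refine ⟨hSc, ?_⟩
    have hbx := key1 x
    have hby := key1 y
    have hbz := key1 z
    rcases Nat.eq_zero_or_pos (t x) with h1 | h1 <;>
      rcases Nat.eq_zero_or_pos (t y) with h2 | h2 <;>
        rcases Nat.eq_zero_or_pos (t z) with h3 | h3
    · omega
    · omega
    · omega
    · have := hS2 y z (by simp) (by simp) hyz h2 h3; omega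
    · omega
    · have := hS2 x z (by simp) (by simp) hxz h1 h3; omega
    · have := hS2 x y (by simp) (by simp) hxy h1 h2; omega
    · have := hS2 x y (by simp) (by simp) hxy h1 h2; omega
  · right
    push_neg at hSc
    refine ⟨hSc, ?_⟩
    obtain ⟨a, ha, b, hb, hab⟩ := Finset.one_lt_card.mp hSc
    obtain ⟨haxyz, hta⟩ := Finset.mem_filter.mp ha
    obtain ⟨hbxyz, htb⟩ := Finset.mem_filter.mp hb
    have haBi : a ∈ Bi := by rw [hxyz]; exact haxyz
    have hbBi : b ∈ Bi := by rw [hxyz]; exact hbxyz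
    have hbound : ∀ w ∈ Bi, t w ≤ 2 := by
      intro w hw
      by_cases hwa : w = a
      · subst hwa
        exact key2 w hw b hbBi hab htb
      · exact key2 w hw a haBi hwa hta
    have hx' : x ∈ Bi := by rw [hxyz]; simp
    have hy' : y ∈ Bi := by rw [hxyz]; simp
    have hz' : z ∈ Bi := by rw [hxyz]; simp
    have := hbound x hx'
    have := hbound y hy'
    have := hbound z hz'
    omega
end

section
/- Suppose v ≥ 3ρ and (X, B) is a PSTS(v) whose maximum partial parallel class has size ρ. Then the number of blocks b satisfies b ≤ ρ·((9ρ - 7)/2 + max{6, ⌊(v - 3ρ)/2⌋}). -/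
/-!
Fix a maximum partial parallel class `P` and let `S` be the `3ρ` points it covers. By
maximality every block meets `S`. A block meeting `S` in at least two points is either in `P`
or is the only block through some pair of `S` not inside a block of `P`; this leaves at most
`ρ + C(3ρ, 2) - 3ρ = ρ(9ρ - 7)/2` such blocks. The blocks meeting `S` in a single point `x`
have pairwise disjoint pairs outside `S`, so there are at most `⌊(v - 3ρ)/2⌋` of them. If two
points `x ≠ y` of one block `t ∈ P` both lie on such blocks, any two of these blocks must meet
(otherwise swapping `t` for them would enlarge `P`), which caps the count at `2` for each point
of `t`. Hence each block of `P` accounts for at most `max 6 ⌊(v - 3ρ)/2⌋` blocks of this kind.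
-/

open Finset

section PartialTripleSystem

variable {ι X : Type*}

theorem Finset.card_le_card_of_pairwiseDisjoint_of_inter_nonempty [DecidableEq X]
    {s : Finset ι} {f : ι → Finset X} {A : Finset X} (hf : (s : Set ι).PairwiseDisjoint f)
    (hA : ∀ i ∈ s, (f i ∩ A).Nonempty) : #s ≤ #A :=
  calc #s = ∑ _i ∈ s, 1 := card_eq_sum_ones s
    _ ≤ ∑ i ∈ s, #(f i ∩ A) := sum_le_sum fun i hi => (hA i hi).card_pos
    _ = #(s.biUnion fun i => f i ∩ A) :=
      (card_biUnion (hf.mono fun _ => inter_subset_left)).symm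
    _ ≤ #A := card_le_card (biUnion_subset.2 fun _ _ => inter_subset_right)

theorem Finset.disjoint_powersetCard_of_disjoint {s t : Finset X} (h : Disjoint s t) {n : ℕ}
    (hn : n ≠ 0) : Disjoint (s.powersetCard n) (t.powersetCard n) := by
  rw [disjoint_left]
  intro u hus hut
  rw [mem_powersetCard] at hus hut
  obtain ⟨z, hz⟩ := card_pos.1 (hus.2 ▸ Nat.pos_of_ne_zero hn)
  exact disjoint_left.1 h (hus.1 hz) (hut.1 hz)

theorem sum_le_max_of_le_of_ne_zero {s : Finset ι} {m : ι → ℕ} {c D : ℕ}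
    (hD : ∀ i ∈ s, m i ≤ D) (hc : ∀ i ∈ s, ∀ j ∈ s, i ≠ j → m j ≠ 0 → m i ≤ c) :
    ∑ i ∈ s, m i ≤ max (#s * c) D := by
  by_cases h : ∃ i ∈ s, c < m i
  · obtain ⟨i, hi, hci⟩ := h
    have hzero : ∀ j ∈ s, j ≠ i → m j = 0 := fun j hj hji => by
      by_contra hj0
      exact hci.not_ge (hc i hi j hj (Ne.symm hji) hj0)
    rw [sum_eq_single_of_mem i hi hzero]
    exact le_max_of_le_right (hD i hi)
  · exact le_max_of_le_left <|
      sum_le_card_nsmul s m c fun i hi => not_lt.1 fun hci => h ⟨i, hi, hci⟩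

variable [DecidableEq X] {B P : Finset (Finset X)} {S : Finset X}

def IsLinear (B : Finset (Finset X)) : Prop :=
  ∀ x y : X, x ≠ y → (B.filter (fun b => x ∈ b ∧ y ∈ b)).card ≤ 1

structure IsMaximumParallelClass (B P : Finset (Finset X)) : Prop where
  subset : P ⊆ B
  pairwiseDisjoint : (P : Set (Finset X)).PairwiseDisjoint id
  card_le : ∀ Q ⊆ B, (Q : Set (Finset X)).PairwiseDisjoint id → #Q ≤ #P

theorem IsLinear.eq_of_two_le_card_inter (hB : IsLinear B) {b₁ b₂ : Finset X} (h₁ : b₁ ∈ B)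
    (h₂ : b₂ ∈ B) (h : 2 ≤ #(b₁ ∩ b₂)) : b₁ = b₂ := by
  obtain ⟨x, hx, y, hy, hxy⟩ := one_lt_card.1 h
  rw [mem_inter] at hx hy
  exact card_le_one.1 (hB x y hxy) b₁ (mem_filter.2 ⟨h₁, hx.1, hy.1⟩)
    b₂ (mem_filter.2 ⟨h₂, hx.2, hy.2⟩)

theorem IsLinear.card_filter_sdiff_le (hB : IsLinear B) (hPB : P ⊆ B) (S : Finset X) :
    #((B.filter fun b => 2 ≤ #(b ∩ S)) \ P) ≤
      #(S.powersetCard 2 \ P.biUnion (powersetCard 2)) := by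
  choose! f hfsub hfcard using fun b (hb : b ∈ (B.filter fun b => 2 ≤ #(b ∩ S)) \ P) =>
    exists_subset_card_eq (mem_filter.1 (mem_sdiff.1 hb).1).2
  have hmemB : ∀ b ∈ (B.filter fun b => 2 ≤ #(b ∩ S)) \ P, b ∈ B := fun b hb =>
    (mem_filter.1 (mem_sdiff.1 hb).1).1
  have heq : ∀ b ∈ (B.filter fun b => 2 ≤ #(b ∩ S)) \ P, ∀ c ∈ B, f b ⊆ c → b = c :=
    fun b hb c hc hbc => hB.eq_of_two_le_card_inter (hmemB b hb) hc <| hfcard b hb ▸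
      card_le_card (subset_inter ((hfsub b hb).trans inter_subset_left) hbc)
  refine card_le_card_of_injOn f (fun b hb => mem_sdiff.2 ⟨?_, ?_⟩) fun b₁ hb₁ b₂ hb₂ h => ?_
  · exact mem_powersetCard.2 ⟨(hfsub b hb).trans inter_subset_right, hfcard b hb⟩
  · simp only [mem_biUnion, mem_powersetCard, not_exists, not_and]
    intro t ht hft _
    exact (mem_sdiff.1 hb).2 (heq b hb t (hPB ht) hft ▸ ht)
  · exact heq b₁ hb₁ b₂ (hmemB b₂ hb₂) (h ▸ (hfsub b₂ hb₂).trans inter_subset_left)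

theorem card_biUnion_id_of_card_eq (hP : (P : Set (Finset X)).PairwiseDisjoint id) {k : ℕ}
    (hk : ∀ t ∈ P, #t = k) : #(P.biUnion id) = k * #P := by
  rw [card_biUnion hP, show ∑ t ∈ P, #(id t) = ∑ _t ∈ P, k from sum_congr rfl hk, sum_const,
    smul_eq_mul, mul_comm]

theorem card_biUnion_powersetCard_two (hP : (P : Set (Finset X)).PairwiseDisjoint id)
    (h3 : ∀ t ∈ P, #t = 3) : #(P.biUnion (powersetCard 2)) = 3 * #P := by
  rw [card_biUnion (t := powersetCard 2) fun t ht t' ht' hne =>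
      disjoint_powersetCard_of_disjoint (hP ht ht' hne : Disjoint t t') two_ne_zero,
    sum_congr rfl fun t ht => by rw [card_powersetCard, h3 t ht], sum_const, smul_eq_mul,
    mul_comm]
  rfl

theorem IsLinear.card_filter_two_le_card_inter_add_le (hB : IsLinear B) (hPB : P ⊆ B)
    (hP : (P : Set (Finset X)).PairwiseDisjoint id) (h3 : ∀ t ∈ P, #t = 3) :
    #(B.filter fun b => 2 ≤ #(b ∩ P.biUnion id)) + 2 * #P ≤ (3 * #P).choose 2 := by
  have hsub : P.biUnion (powersetCard 2) ⊆ (P.biUnion id).powersetCard 2 :=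
    biUnion_subset.2 fun t ht => powersetCard_mono (subset_biUnion_of_mem id ht)
  have hpairs := card_le_card hsub
  have hsdiff := hB.card_filter_sdiff_le hPB (P.biUnion id)
  rw [card_sdiff_of_subset hsub] at hsdiff
  rw [card_powersetCard, card_biUnion_id_of_card_eq hP h3,
    card_biUnion_powersetCard_two hP h3] at hsdiff hpairs
  have := card_le_card_sdiff_add_card (s := B.filter fun b => 2 ≤ #(b ∩ P.biUnion id)) (t := P)
  omega

theorem disjoint_of_inter_biUnion_subset (hP : (P : Set (Finset X)).PairwiseDisjoint id)
    {t t' β : Finset X} (ht : t ∈ P) (ht' : t' ∈ P) (hne : t' ≠ t)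
    (hβ : β ∩ P.biUnion id ⊆ t) : Disjoint β t' := by
  rw [disjoint_left]
  intro z hzβ hzt'
  have hzt : z ∈ t := hβ (mem_inter.2 ⟨hzβ, subset_biUnion_of_mem id ht' hzt'⟩)
  exact disjoint_left.1 (hP ht' ht hne : Disjoint t' t) hzt' hzt

namespace IsMaximumParallelClass

theorem inter_biUnion_nonempty (hP : IsMaximumParallelClass B P) {b : Finset X} (hb : b ∈ B)
    (hbne : b.Nonempty) : (b ∩ P.biUnion id).Nonempty := by
  by_contra h
  have hdisj : Disjoint b (P.biUnion id) :=
    disjoint_iff_inter_eq_empty.2 (not_nonempty_iff_eq_empty.1 h)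
  have hbP : b ∉ P := fun hbP => by
    have hbS : b ⊆ P.biUnion id := subset_biUnion_of_mem id hbP
    exact h (by rwa [inter_eq_left.2 hbS])
  have hle := hP.card_le (insert b P) (insert_subset hb hP.subset) (by
    rw [coe_insert]
    exact hP.pairwiseDisjoint.insert fun t ht _ =>
      hdisj.mono_right (subset_biUnion_of_mem id ht))
  rw [card_insert_of_notMem hbP] at hle
  omega

/-- Two disjoint blocks meeting `⋃ P` only inside the same `t ∈ P` could replace `t`. -/
theorem not_disjoint (hP : IsMaximumParallelClass B P) {t β γ : Finset X} (ht : t ∈ P)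
    (hβ : β ∈ B) (hγ : γ ∈ B) (hβne : β.Nonempty) (hγne : γ.Nonempty) (hβγ : β ≠ γ)
    (hβt : β ∩ P.biUnion id ⊆ t) (hγt : γ ∩ P.biUnion id ⊆ t) : ¬Disjoint β γ := by
  intro hd
  have hdisj := hP.pairwiseDisjoint
  have hout : ∀ {δ : Finset X}, δ.Nonempty → δ ∩ P.biUnion id ⊆ t → δ ∉ P.erase t :=
    fun hδ hδt hmem => hδ.ne_empty <| (disjoint_self_iff_empty _).1 <|
      disjoint_of_inter_biUnion_subset hdisj ht (mem_of_mem_erase hmem) (ne_of_mem_erase hmem)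
        hδt
  have hQ : ((insert β (insert γ (P.erase t)) : Finset (Finset X)) :
      Set (Finset X)).PairwiseDisjoint id := by
    rw [coe_insert, coe_insert]
    refine ((hdisj.subset (coe_subset.2 (erase_subset t P))).insert ?_).insert ?_
    · intro t' ht' _
      exact disjoint_of_inter_biUnion_subset hdisj ht (mem_of_mem_erase ht')
        (ne_of_mem_erase ht') hγt
    · rintro t' (rfl | ht') _
      · exact hd
      · exact disjoint_of_inter_biUnion_subset hdisj ht (mem_of_mem_erase ht')
          (ne_of_mem_erase ht') hβt
  have hle := hP.card_le _
    (insert_subset hβ (insert_subset hγ ((erase_subset t P).trans hP.subset))) hQ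
  rw [card_insert_of_notMem (by simp [hβγ, hout hβne hβt]),
    card_insert_of_notMem (hout hγne hγt), card_erase_of_mem ht] at hle
  have := card_pos.2 ⟨t, ht⟩
  omega

end IsMaximumParallelClass

def blocksMeetingOnlyAt (B : Finset (Finset X)) (S : Finset X) (x : X) : Finset (Finset X) :=
  B.filter (· ∩ S = {x})

theorem mem_blocksMeetingOnlyAt {x : X} {β : Finset X} :
    β ∈ blocksMeetingOnlyAt B S x ↔ β ∈ B ∧ β ∩ S = {x} :=
  mem_filter

theorem IsLinear.pairwiseDisjoint_sdiff_blocksMeetingOnlyAt (hB : IsLinear B) (x : X) :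
    (blocksMeetingOnlyAt B S x : Set (Finset X)).PairwiseDisjoint (· \ S) := by
  intro β hβ γ hγ hne
  rw [mem_coe, mem_blocksMeetingOnlyAt] at hβ hγ
  rw [Function.onFun, disjoint_left]
  intro z hzβ hzγ
  rw [mem_sdiff] at hzβ hzγ
  have hxβ : x ∈ β ∩ S := hβ.2 ▸ mem_singleton_self x
  have hxγ : x ∈ γ ∩ S := hγ.2 ▸ mem_singleton_self x
  refine hne (hB.eq_of_two_le_card_inter hβ.1 hγ.1 (one_lt_card.2 ⟨x, ?_, z, ?_, ?_⟩))
  · exact mem_inter.2 ⟨(mem_inter.1 hxβ).1, (mem_inter.1 hxγ).1⟩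
  · exact mem_inter.2 ⟨hzβ.1, hzγ.1⟩
  · rintro rfl
    exact hzβ.2 (mem_inter.1 hxβ).2

theorem card_sdiff_of_mem_blocksMeetingOnlyAt (hcard : ∀ b ∈ B, #b = 3) {x : X}
    {β : Finset X} (hβ : β ∈ blocksMeetingOnlyAt B S x) : #(β \ S) = 2 := by
  rw [mem_blocksMeetingOnlyAt] at hβ
  have := card_sdiff_add_card_inter β S
  rw [hβ.2, card_singleton, hcard β hβ.1] at this
  omega

theorem IsLinear.two_mul_card_blocksMeetingOnlyAt_le [Fintype X] (hB : IsLinear B)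
    (hcard : ∀ b ∈ B, #b = 3) (x : X) :
    2 * #(blocksMeetingOnlyAt B S x) ≤ Fintype.card X - #S := by
  rw [← card_compl]
  calc 2 * #(blocksMeetingOnlyAt B S x) = ∑ β ∈ blocksMeetingOnlyAt B S x, #(β \ S) := by
        rw [sum_congr rfl fun β => card_sdiff_of_mem_blocksMeetingOnlyAt hcard, sum_const,
          smul_eq_mul, mul_comm]
    _ = #((blocksMeetingOnlyAt B S x).biUnion (· \ S)) :=
        (card_biUnion (hB.pairwiseDisjoint_sdiff_blocksMeetingOnlyAt x)).symm
    _ ≤ #Sᶜ := card_le_card <| biUnion_subset.2 fun β _ z hz =>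
        mem_compl.2 (mem_sdiff.1 hz).2

/-- Each block through `x` meets the outside pair of a fixed block through `y`, and these
blocks have disjoint outside pairs. -/
theorem IsMaximumParallelClass.card_blocksMeetingOnlyAt_le_two
    (hP : IsMaximumParallelClass B P) (hB : IsLinear B) (hcard : ∀ b ∈ B, #b = 3)
    {t : Finset X} {x y : X} {γ : Finset X} (ht : t ∈ P) (hx : x ∈ t) (hy : y ∈ t)
    (hxy : x ≠ y) (hγ : γ ∈ blocksMeetingOnlyAt B (P.biUnion id) y) :
    #(blocksMeetingOnlyAt B (P.biUnion id) x) ≤ 2 := by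
  rw [← card_sdiff_of_mem_blocksMeetingOnlyAt hcard hγ]
  refine card_le_card_of_pairwiseDisjoint_of_inter_nonempty
    (hB.pairwiseDisjoint_sdiff_blocksMeetingOnlyAt x) fun β hβ => ?_
  rw [mem_blocksMeetingOnlyAt] at hβ hγ
  have hxβ : x ∈ β := (mem_inter.1 (hβ.2 ▸ mem_singleton_self x : x ∈ β ∩ _)).1
  have hyγ : y ∈ γ := (mem_inter.1 (hγ.2 ▸ mem_singleton_self y : y ∈ γ ∩ _)).1
  have hβγ : β ≠ γ := fun h => hxy (singleton_injective (hβ.2.symm.trans (h ▸ hγ.2)))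
  obtain ⟨z, hzβ, hzγ⟩ := not_disjoint_iff.1 <|
    hP.not_disjoint ht hβ.1 hγ.1 ⟨x, hxβ⟩ ⟨y, hyγ⟩ hβγ
      (by rw [hβ.2]; simpa using hx) (by rw [hγ.2]; simpa using hy)
  have hzS : z ∉ P.biUnion id := fun hzS => hxy <| by
    have hzx : z ∈ β ∩ P.biUnion id := mem_inter.2 ⟨hzβ, hzS⟩
    have hzy : z ∈ γ ∩ P.biUnion id := mem_inter.2 ⟨hzγ, hzS⟩
    rw [hβ.2, mem_singleton] at hzx
    rw [hγ.2, mem_singleton] at hzy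
    rw [← hzx, hzy]
  exact ⟨z, mem_inter.2 ⟨mem_sdiff.2 ⟨hzβ, hzS⟩, mem_sdiff.2 ⟨hzγ, hzS⟩⟩⟩

theorem IsMaximumParallelClass.sum_card_blocksMeetingOnlyAt_le [Fintype X]
    (hP : IsMaximumParallelClass B P) (hB : IsLinear B) (hcard : ∀ b ∈ B, #b = 3)
    {t : Finset X} (ht : t ∈ P) :
    ∑ x ∈ t, #(blocksMeetingOnlyAt B (P.biUnion id) x) ≤
      max 6 ((Fintype.card X - #(P.biUnion id)) / 2) := by
  have hsum := sum_le_max_of_le_of_ne_zero (s := t) (c := 2)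
    (m := fun x => #(blocksMeetingOnlyAt B (P.biUnion id) x))
    (fun x _ => (Nat.le_div_iff_mul_le two_pos).2
      (mul_comm 2 _ ▸ hB.two_mul_card_blocksMeetingOnlyAt_le hcard x))
    fun x hx y hy hxy hy0 =>
      hP.card_blocksMeetingOnlyAt_le_two hB hcard ht hx hy hxy (card_ne_zero.1 hy0).choose_spec
  rwa [hcard t (hP.subset ht)] at hsum

theorem IsMaximumParallelClass.card_le_mul_add_card_filter_two_le [Fintype X]
    (hP : IsMaximumParallelClass B P) (hB : IsLinear B) (hcard : ∀ b ∈ B, #b = 3) :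
    #B ≤ #P * max 6 ((Fintype.card X - #(P.biUnion id)) / 2) +
      #(B.filter fun b => 2 ≤ #(b ∩ P.biUnion id)) := by
  have hcover : B ⊆ (P.biUnion id).biUnion (blocksMeetingOnlyAt B (P.biUnion id)) ∪
      B.filter fun b => 2 ≤ #(b ∩ P.biUnion id) := by
    intro b hb
    have hpos := (hP.inter_biUnion_nonempty hb
      (card_pos.1 (by rw [hcard b hb]; norm_num))).card_pos
    rcases (Nat.one_le_iff_ne_zero.2 hpos.ne').eq_or_lt with h1 | h2
    · obtain ⟨x, hx⟩ := card_eq_one.1 h1.symm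
      refine mem_union_left _ (mem_biUnion.2 ⟨x, ?_, mem_blocksMeetingOnlyAt.2 ⟨hb, hx⟩⟩)
      exact (mem_inter.1 (hx ▸ mem_singleton_self x : x ∈ b ∩ _)).2
    · exact mem_union_right _ (mem_filter.2 ⟨hb, h2⟩)
  calc #B ≤ #((P.biUnion id).biUnion (blocksMeetingOnlyAt B (P.biUnion id))) +
        #(B.filter fun b => 2 ≤ #(b ∩ P.biUnion id)) :=
        (card_le_card hcover).trans (card_union_le _ _)
    _ ≤ ∑ t ∈ P, ∑ x ∈ t, #(blocksMeetingOnlyAt B (P.biUnion id) x) +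
        #(B.filter fun b => 2 ≤ #(b ∩ P.biUnion id)) := by
        rw [show ∑ t ∈ P, ∑ x ∈ t, #(blocksMeetingOnlyAt B (P.biUnion id) x) =
          ∑ x ∈ P.biUnion id, #(blocksMeetingOnlyAt B (P.biUnion id) x) from
          (sum_biUnion hP.pairwiseDisjoint).symm]
        exact Nat.add_le_add_right card_biUnion_le _
    _ ≤ #P * max 6 ((Fintype.card X - #(P.biUnion id)) / 2) +
        #(B.filter fun b => 2 ≤ #(b ∩ P.biUnion id)) := by
        grw [sum_le_card_nsmul P _ _ fun t ht => hP.sum_card_blocksMeetingOnlyAt_le hB hcard ht,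
          smul_eq_mul]

end PartialTripleSystem

theorem stmt_11_general {X : Type*} [Fintype X] [DecidableEq X] (ρ : ℕ)
    (B : Finset (Finset X))
    (hcard : ∀ b ∈ B, b.card = 3)
    (hpair : ∀ x y : X, x ≠ y → (B.filter (fun b => x ∈ b ∧ y ∈ b)).card ≤ 1)
    (hex : ∃ P ⊆ B, (∀ b1 ∈ P, ∀ b2 ∈ P, b1 ≠ b2 → Disjoint b1 b2) ∧ P.card = ρ)
    (hmax : ∀ P ⊆ B, (∀ b1 ∈ P, ∀ b2 ∈ P, b1 ≠ b2 → Disjoint b1 b2) → P.card ≤ ρ) :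
    (B.card : ℚ) ≤ (ρ : ℚ) * ((9 * (ρ : ℚ) - 7) / 2 +
      max 6 (((Fintype.card X - 3 * ρ) / 2 : ℕ) : ℚ)) := by
  obtain ⟨P, hPB, hP, rfl⟩ := hex
  have hPmax : IsMaximumParallelClass B P := ⟨hPB, hP, hmax⟩
  have h3 : ∀ t ∈ P, #t = 3 := fun t ht => hcard t (hPB ht)
  have hsmall := hPmax.card_le_mul_add_card_filter_two_le hpair hcard
  have hlarge := IsLinear.card_filter_two_le_card_inter_add_le hpair hPB hP h3
  rw [card_biUnion_id_of_card_eq hP h3] at hsmall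
  have hchoose := Nat.cast_choose_two ℚ (3 * #P)
  rw [← Nat.cast_ofNat (R := ℚ) (n := 6), ← Nat.cast_max]
  generalize max 6 ((Fintype.card X - 3 * #P) / 2) = K at hsmall ⊢
  qify at hsmall hlarge
  push_cast at hchoose
  linarith

/-- Theorem: if v ≥ 3ρ and a PSTS(v) has maximum partial parallel class of
size ρ, then b ≤ ρ((9ρ-7)/2 + max{6, ⌊(v-3ρ)/2⌋}). -/
theorem stmt_11 {X : Type*} [Fintype X] [DecidableEq X] (ρ : ℕ)
    (hv : 3 * ρ ≤ Fintype.card X)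
    (B : Finset (Finset X))
    (hcard : ∀ b ∈ B, b.card = 3)
    (hpair : ∀ x y : X, x ≠ y → (B.filter (fun b => x ∈ b ∧ y ∈ b)).card ≤ 1)
    (hex : ∃ P ⊆ B, (∀ b1 ∈ P, ∀ b2 ∈ P, b1 ≠ b2 → Disjoint b1 b2) ∧ P.card = ρ)
    (hmax : ∀ P ⊆ B, (∀ b1 ∈ P, ∀ b2 ∈ P, b1 ≠ b2 → Disjoint b1 b2) → P.card ≤ ρ) :
    (B.card : ℚ) ≤ (ρ : ℚ) * ((9 * (ρ : ℚ) - 7) / 2 +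
      max 6 (((Fintype.card X - 3 * ρ) / 2 : ℕ) : ℚ)) :=
  stmt_11_general ρ B hcard hpair hex hmax
end

section
/- For 7 ≤ v ≤ 14, the maximum number of blocks in a partial Steiner triple system of order v in which no two blocks are disjoint equals 7 (achieved by the Fano plane). -/
/-!
The Fano plane embeds in any set of at least seven points, giving seven pairwise
intersecting triples. Conversely, let `B` be a linear family of pairwise intersecting
triples. If all blocks pass through one point `x`, they are disjoint pairs once `x` is
removed, so `2 |B| ≤ v - 1 ≤ 13`. Otherwise every point `x` misses some block `b₀`, and each
block through `x` is determined by the point where it meets `b₀`, so `x` lies on at most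
three blocks; every block other than a fixed `b₁` meets `b₁`, hence `|B| ≤ 1 + 3 * 2 = 7`.
-/

open Finset

namespace PartialSTS

variable {α β : Type*}

def IsIntersecting (B : Finset (Finset α)) : Prop :=
  ∀ b ∈ B, ∀ b' ∈ B, b ≠ b' → ¬ Disjoint b b'

theorem IsIntersecting.map {B : Finset (Finset α)} (hint : IsIntersecting B) (e : α ↪ β) :
    IsIntersecting (B.map (mapEmbedding e).toEmbedding) := by
  simp only [IsIntersecting, mem_map, RelEmbedding.coe_toEmbedding, mapEmbedding_apply]
  rintro _ ⟨b, hb, rfl⟩ _ ⟨b', hb', rfl⟩ hne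
  rw [Finset.disjoint_map]
  exact hint b hb b' hb' (by rintro rfl; exact hne rfl)

variable [DecidableEq α]

def IsLinear (B : Finset (Finset α)) : Prop :=
  ∀ x y : α, x ≠ y → (B.filter (fun b => x ∈ b ∧ y ∈ b)).card ≤ 1

variable {B : Finset (Finset α)}

theorem isLinear_iff_card_inter_le_one :
    IsLinear B ↔ ∀ b ∈ B, ∀ b' ∈ B, b ≠ b' → (b ∩ b').card ≤ 1 := by
  constructor
  · intro hlin b hb b' hb' hne
    by_contra! h
    obtain ⟨x, hx, y, hy, hxy⟩ := one_lt_card.1 h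
    rw [mem_inter] at hx hy
    have : 1 < (B.filter (fun c => x ∈ c ∧ y ∈ c)).card :=
      one_lt_card.2 ⟨b, mem_filter.2 ⟨hb, hx.1, hy.1⟩, b', mem_filter.2 ⟨hb', hx.2, hy.2⟩, hne⟩
    exact (hlin x y hxy).not_gt this
  · intro hinter x y hxy
    refine card_le_one.2 fun b hb b' hb' => ?_
    rw [mem_filter] at hb hb'
    by_contra hne
    have : 1 < (b ∩ b').card :=
      one_lt_card.2 ⟨x, mem_inter.2 ⟨hb.2.1, hb'.2.1⟩, y, mem_inter.2 ⟨hb.2.2, hb'.2.2⟩, hxy⟩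
    exact (hinter b hb.1 b' hb'.1 hne).not_gt this

theorem IsLinear.eq_of_mem_of_mem (hlin : IsLinear B) {b b' : Finset α} (hb : b ∈ B)
    (hb' : b' ∈ B) {x y : α} (hxy : x ≠ y) (hxb : x ∈ b) (hyb : y ∈ b) (hxb' : x ∈ b')
    (hyb' : y ∈ b') : b = b' :=
  card_le_one.1 (hlin x y hxy) b (mem_filter.2 ⟨hb, hxb, hyb⟩) b' (mem_filter.2 ⟨hb', hxb', hyb'⟩)

theorem IsLinear.map [DecidableEq β] (hlin : IsLinear B) (e : α ↪ β) :
    IsLinear (B.map (mapEmbedding e).toEmbedding) := by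
  rw [isLinear_iff_card_inter_le_one] at hlin ⊢
  simp only [mem_map, RelEmbedding.coe_toEmbedding, mapEmbedding_apply]
  rintro _ ⟨b, hb, rfl⟩ _ ⟨b', hb', rfl⟩ hne
  rw [← map_inter, card_map]
  exact hlin b hb b' hb' (by rintro rfl; exact hne rfl)

theorem IsLinear.two_mul_card_le_of_forall_mem [Fintype α] (hlin : IsLinear B)
    (h3 : ∀ b ∈ B, b.card = 3) {x : α} (hx : ∀ b ∈ B, x ∈ b) :
    2 * B.card ≤ Fintype.card α - 1 := by
  have hdisj : (B : Set (Finset α)).PairwiseDisjoint (fun b => b.erase x) := by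
    intro b hb b' hb' hne
    refine disjoint_left.2 fun y hy hy' => hne ?_
    exact hlin.eq_of_mem_of_mem hb hb' (ne_of_mem_erase hy) (mem_of_mem_erase hy) (hx b hb)
      (mem_of_mem_erase hy') (hx b' hb')
  have hsub : B.biUnion (fun b => b.erase x) ⊆ univ.erase x := fun y hy => by
    obtain ⟨b, -, hyb⟩ := mem_biUnion.1 hy
    exact mem_erase.2 ⟨ne_of_mem_erase hyb, mem_univ y⟩
  calc 2 * B.card = ∑ b ∈ B, (b.erase x).card := by
        rw [mul_comm, ← smul_eq_mul, ← sum_const]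
        exact sum_congr rfl fun b hb => by rw [card_erase_of_mem (hx b hb), h3 b hb]
    _ = (B.biUnion fun b => b.erase x).card := (card_biUnion hdisj).symm
    _ ≤ (univ.erase x).card := card_le_card hsub
    _ = Fintype.card α - 1 := by rw [card_erase_of_mem (mem_univ x), card_univ]

theorem IsLinear.card_filter_mem_le_card (hlin : IsLinear B) (hint : IsIntersecting B)
    {b₀ : Finset α} (hb₀ : b₀ ∈ B) {x : α} (hx : x ∉ b₀) :
    (B.filter (x ∈ ·)).card ≤ b₀.card := by
  have hsub : B.filter (x ∈ ·) ⊆ b₀.biUnion fun z => B.filter fun b => x ∈ b ∧ z ∈ b := by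
    intro b hb
    obtain ⟨hbB, hxb⟩ := mem_filter.1 hb
    obtain ⟨z, hzb, hzb₀⟩ := not_disjoint_iff.1 (hint b hbB b₀ hb₀ (by rintro rfl; exact hx hxb))
    exact mem_biUnion.2 ⟨z, hzb₀, mem_filter.2 ⟨hbB, hxb, hzb⟩⟩
  calc (B.filter (x ∈ ·)).card
      ≤ (b₀.biUnion fun z => B.filter fun b => x ∈ b ∧ z ∈ b).card := card_le_card hsub
    _ ≤ ∑ z ∈ b₀, (B.filter fun b => x ∈ b ∧ z ∈ b).card := card_biUnion_le
    _ ≤ ∑ _z ∈ b₀, 1 := sum_le_sum fun z hz => hlin x z (by rintro rfl; exact hx hz)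
    _ = b₀.card := by rw [sum_const, smul_eq_mul, mul_one]

theorem IsIntersecting.card_le_of_card_filter_mem_le (hint : IsIntersecting B)
    {b₁ : Finset α} (hb₁ : b₁ ∈ B) {d : ℕ} (hdeg : ∀ p ∈ b₁, (B.filter (p ∈ ·)).card ≤ d) :
    B.card ≤ 1 + b₁.card * (d - 1) := by
  have hsub : B.erase b₁ ⊆ b₁.biUnion fun p => (B.erase b₁).filter (p ∈ ·) := by
    intro b hb
    obtain ⟨p, hpb, hpb₁⟩ :=
      not_disjoint_iff.1 (hint b (mem_of_mem_erase hb) b₁ hb₁ (ne_of_mem_erase hb))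
    exact mem_biUnion.2 ⟨p, hpb₁, mem_filter.2 ⟨hb, hpb⟩⟩
  have hdeg' : ∀ p ∈ b₁, ((B.erase b₁).filter (p ∈ ·)).card ≤ d - 1 := fun p hp => by
    rw [filter_erase, card_erase_of_mem (mem_filter.2 ⟨hb₁, hp⟩)]
    exact Nat.sub_le_sub_right (hdeg p hp) 1
  have hrest : (B.erase b₁).card ≤ b₁.card * (d - 1) :=
    calc (B.erase b₁).card ≤ _ := card_le_card hsub
      _ ≤ ∑ p ∈ b₁, ((B.erase b₁).filter (p ∈ ·)).card := card_biUnion_le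
      _ ≤ ∑ _p ∈ b₁, (d - 1) := sum_le_sum hdeg'
      _ = b₁.card * (d - 1) := by rw [sum_const, smul_eq_mul]
  rw [card_erase_of_mem hb₁] at hrest
  have := card_pos.2 ⟨b₁, hb₁⟩
  omega

theorem card_le_seven [Fintype α] (hα : Fintype.card α ≤ 15) (h3 : ∀ b ∈ B, b.card = 3)
    (hlin : IsLinear B) (hint : IsIntersecting B) : B.card ≤ 7 := by
  by_cases hstar : ∃ x, ∀ b ∈ B, x ∈ b
  · obtain ⟨x, hx⟩ := hstar
    have := hlin.two_mul_card_le_of_forall_mem h3 hx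
    omega
  obtain rfl | ⟨b₁, hb₁⟩ := B.eq_empty_or_nonempty
  · simp
  push Not at hstar
  have hdeg : ∀ p : α, (B.filter (p ∈ ·)).card ≤ 3 := fun p => by
    obtain ⟨b₀, hb₀, hp⟩ := hstar p
    exact h3 b₀ hb₀ ▸ hlin.card_filter_mem_le_card hint hb₀ hp
  have := hint.card_le_of_card_filter_mem_le hb₁ fun p _ => hdeg p
  rwa [h3 b₁ hb₁] at this

def fano : Finset (Finset (Fin 7)) :=
  {{0, 1, 2}, {0, 3, 4}, {0, 5, 6}, {1, 3, 5}, {1, 4, 6}, {2, 3, 6}, {2, 4, 5}}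

set_option maxRecDepth 8000 in
theorem card_fano : fano.card = 7 := by decide

set_option maxRecDepth 8000 in
theorem card_eq_three_of_mem_fano : ∀ b ∈ fano, b.card = 3 := by decide

set_option maxRecDepth 8000 in
theorem isLinear_fano : IsLinear fano :=
  isLinear_iff_card_inter_le_one.2 (by decide)

set_option maxRecDepth 8000 in
theorem isIntersecting_fano : IsIntersecting fano := by
  unfold IsIntersecting; decide

end PartialSTS

open PartialSTS in
/-- For 7 ≤ v ≤ 14, the maximum number of blocks in a PSTS(v) in which no two
blocks are disjoint equals 7 (achieved by the Fano plane). -/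
theorem stmt_14 (v : ℕ) (hv7 : 7 ≤ v) (hv14 : v ≤ 14) :
    IsGreatest {n : ℕ | ∃ B : Finset (Finset (Fin v)),
      (∀ b ∈ B, b.card = 3) ∧
      (∀ x y : Fin v, x ≠ y → (B.filter (fun b => x ∈ b ∧ y ∈ b)).card ≤ 1) ∧
      B.Nonempty ∧
      (∀ b1 ∈ B, ∀ b2 ∈ B, b1 ≠ b2 → ¬ Disjoint b1 b2) ∧
      B.card = n} 7 := by
  refine ⟨?_, ?_⟩
  · let e := Fin.castLEEmb hv7
    refine ⟨fano.map (mapEmbedding e).toEmbedding, ?_, isLinear_fano.map e, ?_,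
      isIntersecting_fano.map e, by rw [card_map, card_fano]⟩
    · simpa only [mem_map, RelEmbedding.coe_toEmbedding, mapEmbedding_apply, forall_exists_index,
        and_imp, forall_apply_eq_imp_iff₂, card_map] using card_eq_three_of_mem_fano
    · exact map_nonempty.2 ⟨{0, 1, 2}, by decide⟩
  · rintro n ⟨B, h3, hlin, -, hint, rfl⟩
    exact card_le_seven (by simpa using hv14.trans (by norm_num)) h3 hlin hint
end

section
/- For every even ℓ ≥ 8 and every ρ with 1 ≤ ρ ≤ ℓ/2, if a Room square of side ℓ-1 on a symbol set T of size ℓ exists, then there exist ρ pairwise edge-disjoint perfect matchings F₁,...,F_ρ of the complete graph on T together with pairwise vertex-disjoint edges e₁ ∈ F₁,...,e_ρ ∈ F_ρ. -/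
/-- From a Room square of side ℓ-1 on a symbol set T of even size ℓ ≥ 8, one
can extract, for any 1 ≤ ρ ≤ ℓ/2, ρ pairwise edge-disjoint perfect matchings
F₁,...,F_ρ of the complete graph on T together with pairwise vertex-disjoint
edges e₁ ∈ F₁,...,e_ρ ∈ F_ρ. -/
theorem stmt_17 {X : Type*} [DecidableEq X] (ℓ ρ : ℕ)
    (hl : 8 ≤ ℓ) (hleven : Even ℓ) (hρ1 : 1 ≤ ρ) (hρ2 : ρ ≤ ℓ / 2)
    (T : Finset X) (hT : T.card = ℓ)
    (R : Fin (ℓ - 1) → Fin (ℓ - 1) → Option (Finset X))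
    -- every filled cell contains a pair of symbols from T
    (hcell : ∀ i j p, R i j = some p → p.card = 2 ∧ p ⊆ T)
    -- every pair of symbols from T occurs in exactly one cell
    (hpairs : ∀ p : Finset X, p.card = 2 → p ⊆ T →
      ∃! ij : Fin (ℓ - 1) × Fin (ℓ - 1), R ij.1 ij.2 = some p)
    -- the filled cells of each row form a perfect matching of T
    (hrows : ∀ i, ∀ x ∈ T, ∃! j, ∃ p, R i j = some p ∧ x ∈ p)
    -- the filled cells of each column form a perfect matching of T
    (hcols : ∀ j, ∀ x ∈ T, ∃! i, ∃ p, R i j = some p ∧ x ∈ p) :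
    ∃ (F : Fin ρ → Finset (Finset X)) (e : Fin ρ → Finset X),
      (∀ j, (∀ ed ∈ F j, ed.card = 2 ∧ ed ⊆ T) ∧
        (∀ e1 ∈ F j, ∀ e2 ∈ F j, e1 ≠ e2 → Disjoint e1 e2) ∧
        (∀ x ∈ T, ∃ ed ∈ F j, x ∈ ed)) ∧
      (∀ i j, i ≠ j → Disjoint (F i) (F j)) ∧
      (∀ j, e j ∈ F j) ∧
      (∀ i j, i ≠ j → Disjoint (e i) (e j)) := by
  have hpos : 0 < ℓ - 1 := by omega
  haveI : NeZero (ℓ - 1) := ⟨by omega⟩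
  -- the column index 0
  set c0 : Fin (ℓ - 1) := ⟨0, hpos⟩ with hc0
  -- A = rows having a filled cell in column 0
  set A : Finset (Fin (ℓ - 1)) :=
    Finset.univ.filter (fun i => (R i c0).isSome) with hA
  -- a function assigning to each symbol the row containing it in column 0
  have hrowex : ∀ x ∈ T, ∃ i, ∃ p, R i c0 = some p ∧ x ∈ p := by
    intro x hx
    exact (hcols c0 x hx).exists
  classical
  have hAcard : ℓ / 2 ≤ A.card := by
    set f : X → Fin (ℓ - 1) := fun x =>
      if h : ∃ i, ∃ p, R i c0 = some p ∧ x ∈ p then h.choose else ⟨0, hpos⟩ with hf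
    have hmaps : ∀ x ∈ T, f x ∈ A := by
      intro x hx
      obtain ⟨i, p, hp, hxp⟩ := hrowex x hx
      have h : ∃ i, ∃ p, R i c0 = some p ∧ x ∈ p := ⟨i, p, hp, hxp⟩
      simp only [hf, dif_pos h]
      obtain ⟨q, hq, _⟩ := h.choose_spec
      simp [hA, Finset.mem_filter, hq]
    have hfiber : ∀ i ∈ A, (T.filter fun x => f x = i).card ≤ 2 := by
      intro i hi
      simp only [hA, Finset.mem_filter] at hi
      obtain ⟨p, hp⟩ := Option.isSome_iff_exists.mp hi.2
      have hsub : (T.filter fun x => f x = i) ⊆ p := by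
        intro x hx
        simp only [Finset.mem_filter] at hx
        obtain ⟨hxT, hfx⟩ := hx
        obtain ⟨r, q, hq, hxq⟩ := hrowex x hxT
        have h : ∃ i, ∃ p, R i c0 = some p ∧ x ∈ p := ⟨r, q, hq, hxq⟩
        obtain ⟨q', hq', hxq'⟩ := h.choose_spec
        rw [hf] at hfx
        simp only [dif_pos h] at hfx
        rw [hfx] at hq'
        rw [hp] at hq'
        injection hq' with hq''
        rwa [hq'']
      calc (T.filter fun x => f x = i).card ≤ p.card := Finset.card_le_card hsub
        _ = 2 := (hcell i c0 p hp).1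
    have := Finset.card_le_mul_card_image_of_maps_to hmaps 2 hfiber
    omega
  -- choose ρ rows from A
  have hρA : ρ ≤ A.card := le_trans hρ2 hAcard
  obtain ⟨B, hBA, hBcard⟩ := Finset.exists_subset_card_eq hρA
  set g : Fin ρ → Fin (ℓ - 1) := fun k => (B.orderIsoOfFin hBcard k : Fin (ℓ - 1))
    with hg
  have hginj : Function.Injective g := fun a b h => by
    apply (B.orderIsoOfFin hBcard).injective
    exact Subtype.ext h
  have hgA : ∀ k, (R (g k) c0).isSome := by
    intro k
    have : g k ∈ A := hBA (B.orderIsoOfFin hBcard k).2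
    simpa [hA] using this
  -- the matchings: rows g k
  refine ⟨fun k => Finset.univ.biUnion fun j => (R (g k) j).toFinset,
    fun k => (R (g k) c0).get (hgA k), ?_, ?_, ?_, ?_⟩
  · intro k
    have hmem : ∀ p, p ∈ Finset.univ.biUnion (fun j => (R (g k) j).toFinset) ↔
        ∃ j, R (g k) j = some p := by
      intro p
      simp [Option.mem_toFinset, Option.mem_def]
    refine ⟨?_, ?_, ?_⟩
    · intro ed hed
      obtain ⟨j, hj⟩ := (hmem ed).mp hed
      exact hcell _ j ed hj
    · intro e1 he1 e2 he2 hne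
      obtain ⟨j1, hj1⟩ := (hmem e1).mp he1
      obtain ⟨j2, hj2⟩ := (hmem e2).mp he2
      rw [Finset.disjoint_left]
      intro x hx1 hx2
      have hxT : x ∈ T := (hcell _ j1 e1 hj1).2 hx1
      have := (hrows (g k) x hxT).unique ⟨e1, hj1, hx1⟩ ⟨e2, hj2, hx2⟩
      apply hne
      rw [this] at hj1
      rw [hj1] at hj2
      injection hj2
    · intro x hx
      obtain ⟨j, ⟨p, hp, hxp⟩, _⟩ := hrows (g k) x hx
      exact ⟨p, (hmem p).mpr ⟨j, hp⟩, hxp⟩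
  · intro i j hij
    rw [Finset.disjoint_left]
    intro p hpi hpj
    simp only [Finset.mem_biUnion, Finset.mem_univ, true_and, Option.mem_toFinset,
      Option.mem_def] at hpi hpj
    obtain ⟨j1, hj1⟩ := hpi
    obtain ⟨j2, hj2⟩ := hpj
    obtain ⟨hcard2, hsub⟩ := hcell _ j1 p hj1
    have := (hpairs p hcard2 hsub).unique (y₁ := (g i, j1)) (y₂ := (g j, j2)) hj1 hj2
    exact hij (hginj (congrArg Prod.fst this))
  · intro k
    simp only [Finset.mem_biUnion, Finset.mem_univ, true_and, Option.mem_toFinset,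
      Option.mem_def]
    exact ⟨c0, Option.eq_some_of_isSome (hgA k) ▸ rfl⟩
  · intro i j hij
    rw [Finset.disjoint_left]
    intro x hxi hxj
    set pi := (R (g i) c0).get (hgA i) with hpi
    set pj := (R (g j) c0).get (hgA j) with hpj
    have hpi' : R (g i) c0 = some pi := Option.eq_some_of_isSome (hgA i)
    have hpj' : R (g j) c0 = some pj := Option.eq_some_of_isSome (hgA j)
    have hxT : x ∈ T := (hcell _ c0 pi hpi').2 hxi
    have := (hcols c0 x hxT).unique ⟨pi, hpi', hxi⟩ ⟨pj, hpj', hxj⟩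
    exact hij (hginj this)
end
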